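/- arXiv:quant-ph/0407122 — 3 statements merged into one kernel-verified Lean document; each statement's English description precedes it below -/
import Mathlib

section
/- For any two unit vectors v, w in a real inner product space, defining θ(v,w) = arccos |⟨v,w⟩|, one has θ(v,w) = 2·arcsin((1/2)·min{‖v-w‖, ‖v+w‖}). -/
/-!
Write `t = |⟪v, w⟫| ∈ [0, 1]`. Expanding the squares gives `‖v ∓ w‖² = 2 ∓ 2⟪v, w⟫`, so the
smaller of `‖v - w‖`, `‖v + w‖` is `√(2 - 2t)`, and the claim becomes the half-angle formula
`arccos t = 2 arcsin √((1 - t) / 2)`.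
-/

open Real RealInnerProductSpace

theorem Real.arccos_eq_two_mul_arcsin_sqrt {x : ℝ} (hx₁ : -1 ≤ x) (hx₂ : x ≤ 1) :
    arccos x = 2 * arcsin √((1 - x) / 2) := by
  have h₀ := arccos_nonneg x
  have hπ := arccos_le_pi x
  have hsin : √((1 - x) / 2) = sin (arccos x / 2) := by
    rw [sin_half_eq_sqrt h₀ (by linarith [pi_pos]), cos_arccos hx₁ hx₂]
  rw [hsin, arcsin_sin (by linarith [pi_pos]) (by linarith)]
  ring

section

variable {E : Type*} [NormedAddCommGroup E] [InnerProductSpace ℝ E]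

theorem norm_sub_le_norm_add_iff_inner_nonneg (v w : E) :
    ‖v - w‖ ≤ ‖v + w‖ ↔ 0 ≤ ⟪v, w⟫ := by
  rw [← pow_le_pow_iff_left₀ (norm_nonneg _) (norm_nonneg _) two_ne_zero,
    norm_sub_sq_real, norm_add_sq_real]
  constructor <;> intro h <;> linarith

theorem min_norm_sub_norm_add_sq (v w : E) :
    min ‖v - w‖ ‖v + w‖ ^ 2 = ‖v‖ ^ 2 + ‖w‖ ^ 2 - 2 * |⟪v, w⟫| := by
  rcases le_total 0 ⟪v, w⟫ with h | h
  · rw [min_eq_left ((norm_sub_le_norm_add_iff_inner_nonneg v w).mpr h), abs_of_nonneg h,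
      norm_sub_sq_real]
    ring
  · have hle : ‖v + w‖ ≤ ‖v - w‖ := by
      have := (norm_sub_le_norm_add_iff_inner_nonneg v (-w)).mpr
        (by rwa [inner_neg_right, neg_nonneg])
      rwa [sub_neg_eq_add, ← sub_eq_add_neg] at this
    rw [min_eq_right hle, abs_of_nonpos h, norm_add_sq_real]
    ring

end

theorem angle_eq_two_arcsin_half_min
    {E : Type*} [NormedAddCommGroup E] [InnerProductSpace ℝ E]
    (v w : E) (hv : ‖v‖ = 1) (hw : ‖w‖ = 1) :
    Real.arccos |(inner ℝ v w : ℝ)| =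
      2 * Real.arcsin ((1 / 2) * min ‖v - w‖ ‖v + w‖) := by
  have ht : |⟪v, w⟫| ≤ 1 := by simpa [hv, hw] using abs_real_inner_le_norm v w
  have hmin : (1 / 2) * min ‖v - w‖ ‖v + w‖ = √((1 - |⟪v, w⟫|) / 2) := by
    have hm : 0 ≤ min ‖v - w‖ ‖v + w‖ := le_min (norm_nonneg _) (norm_nonneg _)
    rw [← sqrt_sq (by positivity : 0 ≤ (1 / 2) * min ‖v - w‖ ‖v + w‖), mul_pow,
      min_norm_sub_norm_add_sq, hv, hw]
    ring_nf
  rw [hmin, arccos_eq_two_mul_arcsin_sqrt (by linarith [abs_nonneg ⟪v, w⟫]) ht]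
end

section
/- Consider a randomized algorithm that searches N locations partitioned into K equal blocks for a unique marked item, probing one location per query, and must identify the block containing the marked item with zero error. Under the uniform distribution of the marked location, any deterministic algorithm (hence any zero-error randomized algorithm) makes at least (N/2)·(1 - 1/K²) expected queries. -/
/-- Block of a location: the index `⌊v·K/N⌋` of the size-`N/K` block containing `v`. -/
def blockOf (N K : ℕ) (v : Fin N) : ℕ := v.val * K / N

theorem partial_search_classical_lower_bound
    (N K : ℕ) (hN : 0 < N) (hK : 0 < K) (hKN : K ∣ N)
    (ℓ : Fin N → Fin N) (hℓ : Function.Bijective ℓ)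
    (T : Fin N → ℕ)
    (hvalid : ∀ x : Fin N,
      (∃ j : Fin N, j.val < T x ∧ ℓ j = x) ∨
      (∃ b : ℕ, ∀ j : Fin N, T x ≤ j.val → blockOf N K (ℓ j) = b)) :
    ((N : ℝ) / 2) * (1 - 1 / (K : ℝ) ^ 2) ≤ (∑ x, (T x : ℝ)) / N := by
  obtain ⟨m, hNm⟩ := hKN
  have hmK : m * K = N := by rw [hNm, Nat.mul_comm]
  have hm0 : 0 < m := by
    rcases Nat.eq_zero_or_pos m with h | h
    · subst h; simp at hNm; omega
    · exact h
  have hmN : m ≤ N := by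
    calc m ≤ K * m := Nat.le_mul_of_pos_left m hK
      _ = N := hNm.symm
  set t := N - m with ht
  have htN : t ≤ N := Nat.sub_le _ _
  -- block of v is v.val / m
  have hblock : ∀ v : Fin N, blockOf N K v = v.val / m := by
    intro v
    have h1 : v.val * K / (m * K) = v.val / m := Nat.mul_div_mul_right _ _ hK
    rw [hmK] at h1
    simpa [blockOf] using h1
  let e : Fin N ≃ Fin N := Equiv.ofBijective ℓ hℓ
  -- key pointwise bound
  have key : ∀ x : Fin N, min ((e.symm x).val + 1) t ≤ T x := by
    intro x
    rcases hvalid x with ⟨j, hj, hℓj⟩ | ⟨b, hb⟩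
    · have : e.symm x = j := by
        apply e.injective
        simp [e, Equiv.ofBijective_apply, hℓj]
      rw [this]
      exact le_trans (min_le_left _ _) hj
    · refine le_trans (min_le_right _ _) ?_
      suffices h : N - T x ≤ m by omega
      -- A = probes at times ≥ T x
      set A : Finset (Fin N) := Finset.univ.filter (fun j : Fin N => T x ≤ j.val) with hA
      have hcardA : N - T x ≤ A.card := by
        have h1 : (Finset.univ.filter (fun j : Fin N => ¬ T x ≤ j.val)).card ≤ T x := by
          have hmaps : ∀ j ∈ Finset.univ.filter (fun j : Fin N => ¬ T x ≤ j.val),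
              j.val ∈ Finset.range (T x) := by
            intro j hj
            simp only [Finset.mem_filter, not_le] at hj
            simpa using hj.2
          calc (Finset.univ.filter (fun j : Fin N => ¬ T x ≤ j.val)).card
              ≤ (Finset.range (T x)).card :=
                Finset.card_le_card_of_injOn (fun j => j.val) hmaps
                  (fun a _ b _ h => Fin.ext h)
            _ = T x := Finset.card_range _
        have h2 := Finset.card_filter_add_card_filter_not
          (s := (Finset.univ : Finset (Fin N))) (p := fun j : Fin N => T x ≤ j.val)
        rw [← hA] at h2
        simp only [Finset.card_univ, Fintype.card_fin] at h2
        omega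
      have hAm : A.card ≤ m := by
        have hmaps : ∀ j ∈ A, (⟨(ℓ j).val % m, Nat.mod_lt _ hm0⟩ : Fin m) ∈
            (Finset.univ : Finset (Fin m)) := fun _ _ => Finset.mem_univ _
        have hinj : ∀ j₁ ∈ A, ∀ j₂ ∈ A,
            (⟨(ℓ j₁).val % m, Nat.mod_lt _ hm0⟩ : Fin m) =
            (⟨(ℓ j₂).val % m, Nat.mod_lt _ hm0⟩ : Fin m) → j₁ = j₂ := by
          intro j₁ hj₁ j₂ hj₂ hmod
          simp only [hA, Finset.mem_filter, Finset.mem_univ, true_and] at hj₁ hj₂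
          have hb₁ := hb j₁ hj₁
          have hb₂ := hb j₂ hj₂
          rw [hblock] at hb₁ hb₂
          have hmod' : (ℓ j₁).val % m = (ℓ j₂).val % m := congrArg Fin.val hmod
          have hdiv : (ℓ j₁).val / m = (ℓ j₂).val / m := hb₁.trans hb₂.symm
          have hv : (ℓ j₁).val = (ℓ j₂).val := by
            conv_lhs => rw [← Nat.div_add_mod (ℓ j₁).val m]
            conv_rhs => rw [← Nat.div_add_mod (ℓ j₂).val m]
            rw [hdiv, hmod']
          exact hℓ.injective (Fin.ext hv)
        calc A.card ≤ (Finset.univ : Finset (Fin m)).card :=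
              Finset.card_le_card_of_injOn _ hmaps hinj
          _ = m := by simp
      omega
  -- sum bound
  set S : ℕ := ∑ j ∈ Finset.range N, min (j + 1) t with hS
  have hsum : S ≤ ∑ x, T x := by
    calc S = ∑ j : Fin N, min (j.val + 1) t := (Fin.sum_univ_eq_sum_range _ N).symm
      _ = ∑ x : Fin N, min ((e.symm x).val + 1) t := (Equiv.sum_comp e.symm
          (fun j => min (j.val + 1) t)).symm
      _ ≤ ∑ x, T x := Finset.sum_le_sum (fun x _ => key x)
  -- evaluate S
  have hNt : N - t = m := by omega
  have hsplit : S = (∑ j ∈ Finset.range t, (j + 1)) + m * t := by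
    rw [hS, Finset.range_eq_Ico, ← Finset.sum_Ico_consecutive _ (Nat.zero_le t) htN]
    congr 1
    · rw [← Finset.range_eq_Ico]
      exact Finset.sum_congr rfl (fun j hj => by
        simp only [Finset.mem_range] at hj
        exact min_eq_left (by omega))
    · have hc : ∀ j ∈ Finset.Ico t N, min (j + 1) t = t := fun j hj => by
        simp only [Finset.mem_Ico] at hj
        exact min_eq_right (by omega)
      rw [Finset.sum_congr rfl hc, Finset.sum_const, Nat.card_Ico, smul_eq_mul, hNt]
  have hshift : ∑ j ∈ Finset.range t, (j + 1) = ∑ i ∈ Finset.range (t + 1), i := by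
    rw [Finset.sum_range_succ' (fun i => i) t]
    simp
  have hgauss : (∑ j ∈ Finset.range t, (j + 1)) * 2 = (t + 1) * t := by
    rw [hshift, Finset.sum_range_id_mul_two]
    simp
  have hSval : 2 * S = (t + 1) * t + 2 * (m * t) := by
    rw [hsplit]
    linarith [hgauss]
  -- now real arithmetic
  have hK' : (0 : ℝ) < K := by exact_mod_cast hK
  have hN' : (0 : ℝ) < N := by exact_mod_cast hN
  rw [le_div_iff₀ hN']
  have hsum' : (S : ℝ) ≤ ∑ x, (T x : ℝ) := by exact_mod_cast hsum
  have hSval' : 2 * (S : ℝ) = ((t : ℝ) + 1) * t + 2 * ((m : ℝ) * t) := by exact_mod_cast hSval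
  have ht' : (t : ℝ) = (N : ℝ) - m := by
    have h : t + m = N := by omega
    have := congrArg (fun n : ℕ => (n : ℝ)) h
    push_cast at this
    linarith
  have hmK' : (m : ℝ) * K = N := by exact_mod_cast hmK
  have hm0' : (0 : ℝ) ≤ m := by positivity
  have ht0 : (0 : ℝ) ≤ t := by positivity
  have hlhs : ((N : ℝ) / 2) * (1 - 1 / (K : ℝ) ^ 2) * N = ((N : ℝ) ^ 2 - (m : ℝ) ^ 2) / 2 := by
    rw [← hmK']
    field_simp
  rw [hlhs]
  nlinarith [hsum', hSval', ht', ht0, hm0', sq_nonneg ((t : ℝ))]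
end

section
/- If p : Fin N → ℝ are nonnegative, sum to at most 1, and some p(ŷ) > 1/2, then ∑_y arcsin √(p y) ≤ (N-1)·arcsin(√((1 - p ŷ)/(N-1))) + π/2, and for N ≥ 100 this is strictly less than N·arcsin(1/√N). -/
/-!
Every entry other than `p ŷ` is at most `1 - p ŷ < 1/2`, and `x ↦ arcsin √x` is concave on
`[0, 1/2]`, so by Jensen those entries contribute at most `(N - 1) arcsin √((1 - p ŷ)/(N - 1))`,
while `arcsin √(p ŷ) ≤ π/2`. Bounding `arcsin z ≤ tan (arcsin z) = z / √(1 - z²)` shows that the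
first term is at most `√(N/2)`, and `√(N/2) + π/2 < √N ≤ N arcsin (1/√N)` for `N ≥ 100`.
-/

open Real Finset

theorem ConcaveOn.sum_le_card_mul_map_sum_div_card {ι : Type*} {s : Set ℝ} {f : ℝ → ℝ}
    (hf : ConcaveOn ℝ s f) {t : Finset ι} {p : ι → ℝ} (hp : ∀ i ∈ t, p i ∈ s) :
    ∑ i ∈ t, f (p i) ≤ #t * f ((∑ i ∈ t, p i) / #t) := by
  rcases t.eq_empty_or_nonempty with rfl | ht
  · simp
  have hcard : (0 : ℝ) < #t := by exact_mod_cast ht.card_pos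
  have hjensen := hf.le_map_sum (t := t) (w := fun _ => (#t : ℝ)⁻¹) (p := p)
    (fun _ _ => by positivity) (by simp [hcard.ne']) hp
  simp only [smul_eq_mul, inv_mul_eq_div, ← sum_div] at hjensen
  rwa [div_le_iff₀' hcard] at hjensen

theorem hasDerivAt_arcsin_sqrt {x : ℝ} (hx0 : 0 < x) (hx1 : x < 1) :
    HasDerivAt (fun x => arcsin √x) (2 * √(x * (1 - x)))⁻¹ x := by
  have hsqrt1 : √x < 1 := (sqrt_lt' one_pos).2 (by rwa [one_pow])
  have hsqrt0 : 0 < √x := sqrt_pos.2 hx0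
  refine ((hasDerivAt_arcsin (by linarith) hsqrt1.ne).comp x
    (hasDerivAt_sqrt hx0.ne')).congr_deriv ?_
  have : 0 < √(1 - x) := sqrt_pos.2 (by linarith)
  rw [sq_sqrt hx0.le, sqrt_mul hx0.le]
  field_simp

theorem concaveOn_arcsin_sqrt : ConcaveOn ℝ (Set.Icc 0 (1 / 2)) fun x => arcsin √x := by
  refine AntitoneOn.concaveOn_of_deriv (convex_Icc _ _)
    (continuous_arcsin.comp continuous_sqrt).continuousOn ?_ ?_ <;> rw [interior_Icc]
  · exact fun x hx =>
      (hasDerivAt_arcsin_sqrt hx.1 (by linarith [hx.2])).differentiableAt.differentiableWithinAt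
  · intro x hx y hy hxy
    rw [(hasDerivAt_arcsin_sqrt hx.1 (by linarith [hx.2])).deriv,
      (hasDerivAt_arcsin_sqrt hy.1 (by linarith [hy.2])).deriv]
    have hxpos : 0 < x * (1 - x) := mul_pos hx.1 (by linarith [hx.2])
    have hmono : x * (1 - x) ≤ y * (1 - y) := by nlinarith [hx.2, hy.2]
    gcongr

theorem self_le_arcsin {x : ℝ} (hx0 : 0 ≤ x) (hx1 : x ≤ 1) : x ≤ arcsin x := by
  simpa [sin_arcsin (by linarith) hx1] using sin_le (arcsin_nonneg.2 hx0)

theorem arcsin_sqrt_le_sqrt_div_one_sub {x : ℝ} (hx0 : 0 ≤ x) (hx1 : x < 1) :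
    arcsin √x ≤ √(x / (1 - x)) := by
  have hsqrt1 : √x < 1 := (sqrt_lt' one_pos).2 (by rwa [one_pow])
  have h := le_tan (arcsin_nonneg.2 (sqrt_nonneg x)) (arcsin_lt_pi_div_two.2 hsqrt1)
  rwa [tan_arcsin, sq_sqrt hx0, ← sqrt_div' _ (by linarith)] at h

theorem sub_one_mul_arcsin_sqrt_div_le {n u : ℝ} (hn : 2 ≤ n) (hu0 : 0 ≤ u) (hu : u ≤ 1 / 2) :
    (n - 1) * arcsin √(u / (n - 1)) ≤ √(n / 2) := by
  have hn1 : 0 < n - 1 := by linarith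
  have hx1 : u / (n - 1) < 1 := by rw [div_lt_one hn1]; linarith
  calc (n - 1) * arcsin √(u / (n - 1))
      ≤ (n - 1) * √(u / (n - 1) / (1 - u / (n - 1))) :=
        mul_le_mul_of_nonneg_left (arcsin_sqrt_le_sqrt_div_one_sub (by positivity) hx1) hn1.le
    _ ≤ √(n / 2) := by
        rw [le_sqrt (by positivity) (by positivity), mul_pow, sq_sqrt (by positivity)]
        field_simp
        rw [div_le_iff₀ (by linarith)]
        nlinarith [mul_nonneg (sub_nonneg.2 hu) (by positivity : (0 : ℝ) ≤ 2 * (n - 1) ^ 2 + n)]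

theorem sqrt_le_mul_arcsin_one_div_sqrt {x : ℝ} (hx : 1 ≤ x) : √x ≤ x * arcsin (1 / √x) := by
  have hsqrt : 1 ≤ √x := one_le_sqrt.2 hx
  calc √x = x * (1 / √x) := by rw [mul_one_div, div_sqrt]
    _ ≤ x * arcsin (1 / √x) := mul_le_mul_of_nonneg_left
        (self_le_arcsin (by positivity) (div_le_one_of_le₀ hsqrt (by positivity))) (by linarith)

theorem sqrt_div_two_add_pi_div_two_lt_sqrt {x : ℝ} (hx : 100 ≤ x) : √(x / 2) + π / 2 < √x := by
  have h10 : 10 ≤ √x := by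
    rw [show (10 : ℝ) = √(10 ^ 2) by rw [sqrt_sq (by norm_num)]]
    exact sqrt_le_sqrt (by linarith)
  have hhalf : √(x / 2) ≤ 0.71 * √x := by
    rw [sqrt_le_left (by positivity), mul_pow, sq_sqrt (by linarith)]
    linarith
  linarith [pi_lt_d2]

theorem sum_arcsin_sqrt_le_of_half_le {ι : Type*} [Fintype ι] {p : ι → ℝ} (hp : ∀ i, 0 ≤ p i)
    (hsum : ∑ i, p i ≤ 1) {i₀ : ι} (hi₀ : 1 / 2 ≤ p i₀) :
    ∑ i, arcsin √(p i) ≤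
      (Fintype.card ι - 1) * arcsin √((1 - p i₀) / (Fintype.card ι - 1)) + π / 2 := by
  classical
  set s := univ.erase i₀
  have hrest : ∑ i ∈ s, p i ≤ 1 - p i₀ := by linarith [add_sum_erase univ p (mem_univ i₀)]
  have hmem : ∀ i ∈ s, p i ∈ Set.Icc 0 (1 / 2) := fun i hi =>
    ⟨hp i, by linarith [single_le_sum (fun j _ => hp j) hi]⟩
  have hcard : (#s : ℝ) = Fintype.card ι - 1 := by
    rw [card_erase_of_mem (mem_univ _), card_univ, Nat.cast_sub (Fintype.card_pos_iff.2 ⟨i₀⟩),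
      Nat.cast_one]
  calc ∑ i, arcsin √(p i) = ∑ i ∈ s, arcsin √(p i) + arcsin √(p i₀) :=
        (sum_erase_add _ _ (mem_univ _)).symm
    _ ≤ #s * arcsin √((∑ i ∈ s, p i) / #s) + π / 2 :=
        add_le_add (concaveOn_arcsin_sqrt.sum_le_card_mul_map_sum_div_card hmem)
          (arcsin_le_pi_div_two _)
    _ ≤ _ := by
        rw [← hcard]
        gcongr

theorem sum_arcsin_sqrt_with_large_entry (N : ℕ) (hN : 100 ≤ N)
    (p : Fin N → ℝ) (hp : ∀ y, 0 ≤ p y) (hsum : ∑ y, p y ≤ 1)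
    (y0 : Fin N) (hy0 : 1 / 2 < p y0) :
    (∑ y, Real.arcsin (Real.sqrt (p y)) ≤
        ((N : ℝ) - 1) * Real.arcsin (Real.sqrt ((1 - p y0) / ((N : ℝ) - 1))) + Real.pi / 2) ∧
    ((N : ℝ) - 1) * Real.arcsin (Real.sqrt ((1 - p y0) / ((N : ℝ) - 1))) + Real.pi / 2
      < (N : ℝ) * Real.arcsin (1 / Real.sqrt N) := by
  have hNR : (100 : ℝ) ≤ N := by exact_mod_cast hN
  have hy0_le_one : p y0 ≤ 1 := (single_le_sum (fun y _ => hp y) (mem_univ y0)).trans hsum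
  refine ⟨by simpa using sum_arcsin_sqrt_le_of_half_le hp hsum hy0.le, ?_⟩
  calc ((N : ℝ) - 1) * arcsin √((1 - p y0) / ((N : ℝ) - 1)) + π / 2
      ≤ √(N / 2) + π / 2 := by
        gcongr
        exact sub_one_mul_arcsin_sqrt_div_le (by linarith) (by linarith) (by linarith)
    _ < √N := sqrt_div_two_add_pi_div_two_lt_sqrt hNR
    _ ≤ N * arcsin (1 / √N) := sqrt_le_mul_arcsin_one_div_sqrt (by linarith)
end
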